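/- arXiv:math/0501533 — 5 statements merged into one kernel-verified Lean document; each statement's English description precedes it below -/
import Mathlib

section
/- Let d ≥ 2 and let a : ℤ^d → ℤ^d be a random function on a probability space such that x and a(x) are always nearest neighbors, the graph with edge set {{x, a(x)} : x ∈ ℤ^d} has no cycles, and the collection (a(x) − x)_{x ∈ ℤ^d} is stationary under lattice translations. Define h(x) = sup{n ≥ 0 : x = aⁿ(y) for some y ∈ ℤ^d}. Then there is a constant c₁ > 0 depending only on d such that liminf_{n→∞} n^{d−1} ℙ[h(0) ≥ n] ≥ c₁. -/
open MeasureTheory Filter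
open scoped ENNReal

open Function Finset

/-!
Fix `n ≥ 1`. In every realisation the ancestors `a^[n + k] 0`, `k ≤ n`, are distinct because
there are no cycles, lie in the box `[-2n, 2n]^d` because every step has length one, and have
height at least `n + k ≥ n`. So at least `n + 1` points of the box have height `≥ n`, and taking
expectations, stationarity gives `(4n + 1)^d ℙ[h(0) ≥ n] ≥ n + 1`, i.e.
`n^(d-1) ℙ[h(0) ≥ n] ≥ 5^(-d)`.
-/

namespace AncestralField

section Height

variable {α β : Type*}

noncomputable def height (f : α → α) (x : α) : ℕ∞ :=
  ⨆ (m : ℕ) (_ : ∃ y, f^[m] y = x), (m : ℕ∞)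

theorem le_height_iff {f : α → α} {x : α} {n : ℕ} :
    (n : ℕ∞) ≤ height f x ↔ ∃ m, n ≤ m ∧ ∃ y, f^[m] y = x := by
  constructor
  · cases n with
    | zero => exact fun _ => ⟨0, le_rfl, x, rfl⟩
    | succ k =>
      intro h
      rw [Nat.cast_succ, ENat.add_one_le_iff (ENat.natCast_ne_top k)] at h
      obtain ⟨m, hm⟩ := lt_iSup_iff.mp h
      obtain ⟨hy, hkm⟩ := lt_iSup_iff.mp hm
      exact ⟨m, by exact_mod_cast hkm, hy⟩
  · rintro ⟨m, hnm, hy⟩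
    exact (Nat.cast_le.mpr hnm).trans
      (le_iSup₂ (f := fun m (_ : ∃ y, f^[m] y = x) => (m : ℕ∞)) m hy)

theorem le_height_iterate (f : α → α) (k : ℕ) (y : α) : (k : ℕ∞) ≤ height f (f^[k] y) :=
  le_height_iff.mpr ⟨k, le_rfl, y, rfl⟩

theorem height_semiconj {f : α → α} {g : β → β} (e : α ≃ β) (h : Semiconj e f g) (x : α) :
    height g (e x) = height f x := by
  have hiff : ∀ m, (∃ y, g^[m] y = e x) ↔ ∃ y, f^[m] y = x := fun m => by
    simp only [e.surjective.exists, ← (h.iterate_right m).eq, e.injective.eq_iff]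
  simp only [height, hiff]

end Height

theorem injective_iterate_apply {α : Type*} {f : α → α}
    (hf : ∀ x n, 1 ≤ n → f^[n] x ≠ x) (x : α) : Injective fun k => f^[k] x := by
  refine .of_lt_imp_ne fun j k hjk heq => hf (f^[j] x) (k - j) (by omega) ?_
  rw [← iterate_add_apply, Nat.sub_add_cancel hjk.le]
  exact heq.symm

theorem abs_iterate_sub_le {α : Type*} {f : α → α} {φ : α → ℤ}
    (hf : ∀ x, |φ (f x) - φ x| ≤ 1) (k : ℕ) (x : α) : |φ (f^[k] x) - φ x| ≤ k := by
  induction k with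
  | zero => simp
  | succ k ih =>
    rw [iterate_succ_apply']
    calc |φ (f (f^[k] x)) - φ x| ≤ |φ (f (f^[k] x)) - φ (f^[k] x)| + |φ (f^[k] x) - φ x| :=
          abs_sub_le _ _ _
      _ ≤ 1 + k := add_le_add (hf _) ih
      _ = (k + 1 : ℕ) := by push_cast; ring

section Stationarity

variable {G Ω : Type*} [AddCommGroup G]

def stepBy (b : G → G) : G → G := fun x => x + b x

theorem height_stepBy_shift (f : G → G) (z x : G) :
    height (stepBy fun u => f (u + z) - (u + z)) x = height f (x + z) :=
  height_semiconj (f := stepBy fun u => f (u + z) - (u + z)) (Equiv.addRight z)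
    (fun u => by simp only [stepBy, Equiv.coe_addRight]; abel) x |>.symm

theorem setOf_le_height_eq_preimage (a : Ω → G → G) (n : ℕ) (z : G) :
    {ω | (n : ℕ∞) ≤ height (a ω) z} =
      (fun ω => fun x => a ω (x + z) - (x + z)) ⁻¹' {b | (n : ℕ∞) ≤ height (stepBy b) 0} := by
  ext ω
  simp [height_stepBy_shift]

variable [Countable G] [MeasurableSpace G] [MeasurableSingletonClass G]

theorem measurable_iterate_stepBy_apply (m : ℕ) (y : G) :
    Measurable fun b : G → G => (stepBy b)^[m] y := by
  have hstep : Measurable fun p : (G → G) × G => stepBy p.1 p.2 :=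
    measurable_from_prod_countable_left fun y => measurable_const.add (measurable_pi_apply y)
  induction m with
  | zero => exact measurable_const
  | succ m ih =>
    simp only [iterate_succ_apply']
    exact hstep.comp (measurable_id.prodMk ih)

theorem measurableSet_le_height_stepBy (n : ℕ) (x : G) :
    MeasurableSet {b : G → G | (n : ℕ∞) ≤ height (stepBy b) x} := by
  have hset : {b : G → G | (n : ℕ∞) ≤ height (stepBy b) x} =
      ⋃ m ≥ n, ⋃ y, (fun b => (stepBy b)^[m] y) ⁻¹' {x} := by
    ext b
    simp [le_height_iff]
  rw [hset]
  exact .iUnion fun m => .iUnion fun _ => .iUnion fun y =>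
    measurable_iterate_stepBy_apply m y (measurableSet_singleton x)

variable [MeasurableSpace Ω]

def IsStationary (ℙ : Measure Ω) (a : Ω → G → G) : Prop :=
  ∀ z : G, Measurable (fun ω => fun x => a ω (x + z) - (x + z)) ∧
    Measure.map (fun ω => fun x => a ω (x + z) - (x + z)) ℙ =
      Measure.map (fun ω => fun x => a ω x - x) ℙ

theorem IsStationary.measurableSet_le_height {ℙ : Measure Ω} {a : Ω → G → G}
    (ha : IsStationary ℙ a) (n : ℕ) (z : G) : MeasurableSet {ω | (n : ℕ∞) ≤ height (a ω) z} := by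
  rw [setOf_le_height_eq_preimage]
  exact (ha z).1 (measurableSet_le_height_stepBy n 0)

theorem IsStationary.measure_le_height_eq {ℙ : Measure Ω} {a : Ω → G → G}
    (ha : IsStationary ℙ a) (n : ℕ) (z : G) :
    ℙ {ω | (n : ℕ∞) ≤ height (a ω) z} = ℙ {ω | (n : ℕ∞) ≤ height (a ω) 0} := by
  have hS := measurableSet_le_height_stepBy (G := G) n 0
  rw [setOf_le_height_eq_preimage a n z, setOf_le_height_eq_preimage a n 0,
    ← Measure.map_apply (ha z).1 hS, ← Measure.map_apply (ha 0).1 hS, (ha z).2, (ha 0).2]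

end Stationarity

theorem natCast_mul_measure_univ_le_sum {Ω ι : Type*} [MeasurableSpace Ω] (μ : Measure Ω)
    (s : Finset ι) {E : ι → Set Ω} (hE : ∀ i ∈ s, MeasurableSet (E i))
    [∀ ω, DecidablePred (ω ∈ E ·)] {k : ℕ} (hk : ∀ ω, k ≤ #{i ∈ s | ω ∈ E i}) :
    k * μ Set.univ ≤ ∑ i ∈ s, μ (E i) := by
  calc k * μ Set.univ = ∫⁻ _, (k : ℝ≥0∞) ∂μ := (lintegral_const _).symm
    _ ≤ ∫⁻ ω, ∑ i ∈ s, (E i).indicator 1 ω ∂μ := lintegral_mono fun ω => by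
        simp only [Set.indicator_apply, Pi.one_apply, sum_boole]
        exact_mod_cast hk ω
    _ = ∑ i ∈ s, μ (E i) := by
        rw [lintegral_finsetSum' _ fun i hi => (measurable_one.indicator (hE i hi)).aemeasurable]
        exact sum_congr rfl fun i hi => lintegral_indicator_one (hE i hi)

section Lattice

variable {ι : Type*} [Fintype ι] [DecidableEq ι]

theorem card_piFinset_Icc_neg (r : ℕ) :
    #(Fintype.piFinset fun _ : ι => Icc (-(r : ℤ)) r) = (2 * r + 1) ^ Fintype.card ι := by
  rw [Fintype.card_piFinset, prod_const, card_univ, Int.card_Icc]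
  congr
  omega

theorem add_one_le_card_le_height {f : (ι → ℤ) → ι → ℤ} (hstep : ∀ x i, |f x i - x i| ≤ 1)
    (hf : ∀ x n, 1 ≤ n → f^[n] x ≠ x) (n : ℕ) :
    n + 1 ≤ #{x ∈ Fintype.piFinset (fun _ : ι => Icc (-(2 * n : ℤ)) (2 * n)) |
      (n : ℕ∞) ≤ height f x} := by
  set orbit := (range (n + 1)).image fun k => f^[n + k] 0
  have horbit : #orbit = n + 1 := by
    rw [card_image_of_injective _ fun j k h => add_left_cancel (injective_iterate_apply hf 0 h),
      card_range]
  refine horbit ▸ card_le_card fun x hx => ?_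
  obtain ⟨k, hk, rfl⟩ := mem_image.mp hx
  refine mem_filter.mpr ⟨Fintype.mem_piFinset.mpr fun i => ?_, ?_⟩
  · have hdist := abs_iterate_sub_le (φ := fun x => x i) (hstep · i) (n + k) 0
    rw [mem_range] at hk
    rw [mem_Icc, ← abs_le]
    simp only [Pi.zero_apply, sub_zero] at hdist
    omega
  · exact (Nat.cast_le.mpr (Nat.le_add_right n k)).trans (le_height_iterate f (n + k) 0)

end Lattice

theorem four_mul_add_one_pow_le {n : ℕ} (hn : 1 ≤ n) (d : ℕ) :
    (4 * n + 1) ^ d ≤ 5 ^ d * (n ^ (d - 1) * (n + 1)) := by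
  cases d with
  | zero => simp
  | succ d =>
    calc (4 * n + 1) ^ (d + 1) ≤ (5 * n) ^ (d + 1) := Nat.pow_le_pow_left (by omega) _
      _ = 5 ^ (d + 1) * (n ^ d * n) := by ring
      _ ≤ 5 ^ (d + 1) * (n ^ (d + 1 - 1) * (n + 1)) := by
        simp only [Nat.add_sub_cancel]; gcongr; omega

theorem inv_five_pow_le_mul_measure_le_height {d : ℕ} {Ω : Type*} [MeasurableSpace Ω]
    {ℙ : Measure Ω} [IsProbabilityMeasure ℙ] {a : Ω → (Fin d → ℤ) → Fin d → ℤ}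
    (hstep : ∀ ω x, ∑ i, |a ω x i - x i| = 1) (hcyc : ∀ ω x n, 1 ≤ n → (a ω)^[n] x ≠ x)
    (ha : IsStationary ℙ a) {n : ℕ} (hn : 1 ≤ n) :
    (5 ^ d)⁻¹ ≤ (n : ℝ≥0∞) ^ (d - 1) * ℙ {ω | (n : ℕ∞) ≤ height (a ω) 0} := by
  set p := ℙ {ω | (n : ℕ∞) ≤ height (a ω) 0}
  set box := Fintype.piFinset fun _ : Fin d => Icc (-(2 * n : ℤ)) (2 * n)
  have hcoord : ∀ ω x i, |a ω x i - x i| ≤ 1 := fun ω x i =>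
    (single_le_sum (f := fun j => |a ω x j - x j|) (fun j _ => abs_nonneg _) (mem_univ i)).trans
      (hstep ω x).le
  have hcount : (n + 1 : ℝ≥0∞) ≤ (4 * n + 1 : ℕ) ^ d * p :=
    calc (n + 1 : ℝ≥0∞) = (n + 1 : ℕ) * ℙ Set.univ := by simp
      _ ≤ ∑ x ∈ box, ℙ {ω | (n : ℕ∞) ≤ height (a ω) x} :=
        natCast_mul_measure_univ_le_sum ℙ box (fun x _ => ha.measurableSet_le_height n x)
          fun ω => add_one_le_card_le_height (hcoord ω) (hcyc ω) n
      _ = (4 * n + 1 : ℕ) ^ d * p := by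
        simp only [ha.measure_le_height_eq, sum_const, nsmul_eq_mul, box]
        rw [← Nat.cast_ofNat, ← Nat.cast_mul, card_piFinset_Icc_neg, Fintype.card_fin]
        push_cast; ring
  have hC : ((4 * n + 1 : ℕ) : ℝ≥0∞) ^ d ≠ 0 := by positivity
  have hC' : ((4 * n + 1 : ℕ) : ℝ≥0∞) ^ d ≠ ⊤ := ENNReal.pow_ne_top (ENNReal.natCast_ne_top _)
  rw [ENNReal.inv_le_iff_le_mul (by simp) (by simp), ← ENNReal.mul_le_mul_iff_left hC hC']
  calc 1 * ((4 * n + 1 : ℕ) : ℝ≥0∞) ^ d ≤ 5 ^ d * (n ^ (d - 1) * (n + 1)) := by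
        rw [one_mul]; exact_mod_cast four_mul_add_one_pow_le hn d
    _ ≤ 5 ^ d * (n ^ (d - 1) * ((4 * n + 1 : ℕ) ^ d * p)) := by gcongr
    _ = 5 ^ d * (n ^ (d - 1) * p) * (4 * n + 1 : ℕ) ^ d := by ring

end AncestralField

theorem stmt2_general (d : ℕ) :
    ∃ c : ℝ≥0∞, 0 < c ∧
      ∀ (Ω : Type) [MeasurableSpace Ω] (ℙ : Measure Ω) [IsProbabilityMeasure ℙ]
        (a : Ω → (Fin d → ℤ) → (Fin d → ℤ)),
        (∀ ω x, ∑ i, |a ω x i - x i| = 1) →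
        (∀ (ω : Ω) (x : Fin d → ℤ) (n : ℕ), 1 ≤ n → (a ω)^[n] x ≠ x) →
        (∀ z : Fin d → ℤ,
          Measurable (fun ω => fun x => a ω (x + z) - (x + z)) ∧
          Measure.map (fun ω => fun x => a ω (x + z) - (x + z)) ℙ =
            Measure.map (fun ω => fun x => a ω x - x) ℙ) →
        c ≤ liminf (fun n : ℕ =>
          (n : ℝ≥0∞) ^ (d - 1) *
            ℙ {ω | (n : ℕ∞) ≤ ⨆ (m : ℕ) (_ : ∃ y, (a ω)^[m] y = 0), (m : ℕ∞)}) atTop := by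
  refine ⟨(5 ^ d)⁻¹, ENNReal.inv_pos.mpr (ENNReal.pow_ne_top ENNReal.ofNat_ne_top), ?_⟩
  intro Ω _ ℙ _ a hstep hcyc hstat
  exact le_liminf_of_le (h := (eventually_ge_atTop 1).mono fun n hn =>
    AncestralField.inv_five_pow_le_mul_measure_le_height hstep hcyc hstat hn)

/-- Theorem 1 of Bramson–Zeitouni–Zerner: there is `c₁ > 0` depending only on `d ≥ 2` such
that for every stationary ancestral function `a` on `ℤ^d`,
`liminf_{n} n^(d-1) ℙ[h(0) ≥ n] ≥ c₁`, where `h(x) = sup{n : x = aⁿ(y) for some y}`. -/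
theorem stmt2 (d : ℕ) (hd : 2 ≤ d) :
    ∃ c : ℝ≥0∞, 0 < c ∧
      ∀ (Ω : Type) [MeasurableSpace Ω] (ℙ : Measure Ω) [IsProbabilityMeasure ℙ]
        (a : Ω → (Fin d → ℤ) → (Fin d → ℤ)),
        (∀ ω x, ∑ i, |a ω x i - x i| = 1) →
        (∀ (ω : Ω) (x : Fin d → ℤ) (n : ℕ), 1 ≤ n → (a ω)^[n] x ≠ x) →
        (∀ z : Fin d → ℤ,
          Measurable (fun ω => fun x => a ω (x + z) - (x + z)) ∧
          Measure.map (fun ω => fun x => a ω (x + z) - (x + z)) ℙ =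
            Measure.map (fun ω => fun x => a ω x - x) ℙ) →
        c ≤ liminf (fun n : ℕ =>
          (n : ℝ≥0∞) ^ (d - 1) *
            ℙ {ω | (n : ℕ∞) ≤ ⨆ (m : ℕ) (_ : ∃ y, (a ω)^[m] y = 0), (m : ℕ∞)}) atTop :=
  stmt2_general d
end

section
/- Let (L(y))_{y ∈ ℤ^d} be i.i.d. random variables with values in (1,∞) and atomless law satisfying ℙ[L(0) > t] = θ_d t^{−d} for all t ≥ n₀, where n₀^d ≥ θ_d. Define λᵢ(x) = sup{L(y) : x ∈ y + U_{i,L(y)}}, where U_{i,t} = {x ∈ [0,t]^d ∩ ℤ^d : xᵢ = 0 and xⱼ > 0 for j ≠ i}. Then there is a constant c₃ < ∞ such that ℙ[λᵢ(0) > t] ≤ c₃ t^{−1} for all t > n₀. -/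
/-!
A union bound suffices. If `0 ∈ y + U_{i,L(y)}` and `L(y) > t`, then `yᵢ = 0`, `yⱼ < 0` for
`j ≠ i`, and `L(y) > s := max(t, |y|_∞ - 1)`, an event of probability `θ s^{-d}`. Writing
`d = n + 1`, we have `s^{-d} = ∏_{j ≠ i} s^{-(1 + 1/n)} ≤ ∏_{j ≠ i} max(t, |yⱼ| - 1)^{-(1 + 1/n)}`,
so the sum over `y` factorises into `n` copies of `∑ₖ max(t, k)^{-(1 + 1/n)} ≤ (3 + n) t^{-1/n}`,
whose product is `(3 + n)^n / t`.
-/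

open MeasureTheory ProbabilityTheory
open scoped ENNReal

open Finset Real

lemma mul_rpow_neg_le_rpow_neg_sub {q a : ℝ} (hq : 0 < q) (ha : 0 < a) :
    q * (a + 1) ^ (-(1 + q)) ≤ a ^ (-q) - (a + 1) ^ (-q) := by
  have ha1 : 0 < a + 1 := by linarith
  have hA := rpow_pos_of_pos ha q
  have hB := rpow_pos_of_pos ha1 q
  -- Bernoulli's inequality `1 + (1 + q) s ≤ (1 + s) ^ (1 + q)` at `s = 1 / a`
  have bernoulli : a * a ^ q + (1 + q) * a ^ q ≤ (a + 1) * (a + 1) ^ q := by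
    have hb := one_add_mul_self_le_rpow_one_add (s := a⁻¹) (by linarith [inv_pos.2 ha])
      (p := 1 + q) (by linarith)
    rw [show 1 + a⁻¹ = (a + 1) / a by field_simp, div_rpow ha1.le ha.le,
      le_div_iff₀ (rpow_pos_of_pos ha _), rpow_one_add' ha.le (by linarith),
      rpow_one_add' ha1.le (by linarith)] at hb
    calc a * a ^ q + (1 + q) * a ^ q = (1 + (1 + q) * a⁻¹) * (a * a ^ q) := by field_simp
      _ ≤ _ := hb
  rw [rpow_neg ha.le, rpow_neg ha1.le, rpow_neg ha1.le, rpow_one_add' ha1.le (by linarith),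
    inv_sub_inv hA.ne' hB.ne', ← div_eq_mul_inv, div_le_div_iff₀ (by positivity) (by positivity)]
  nlinarith [mul_pos hA hB]

lemma sum_range_max_rpow_neg_le {q t : ℝ} (hq : 0 < q) (ht : 1 ≤ t) (K : ℕ) :
    ∑ k ∈ range K, max t k ^ (-(1 + q)) ≤ (3 + q⁻¹) * t ^ (-q) := by
  set N := ⌈t⌉₊
  have htN : t ≤ N := Nat.le_ceil t
  have hN : (N : ℝ) ≤ 2 * t := by linarith [Nat.ceil_lt_add_one (zero_le_one.trans ht)]
  have ht0 : 0 < t := by linarith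
  have hterm : ∀ k : ℕ, 0 ≤ max t k ^ (-(1 + q)) := fun k =>
    rpow_nonneg (ht0.le.trans (le_max_left _ _)) _
  have head : ∑ k ∈ range (N + 1), max t k ^ (-(1 + q)) ≤ 3 * t ^ (-q) := by
    calc ∑ k ∈ range (N + 1), max t k ^ (-(1 + q)) ≤ ∑ k ∈ range (N + 1), t ^ (-(1 + q)) :=
          sum_le_sum fun k _ => rpow_le_rpow_of_nonpos ht0 (le_max_left _ _) (by linarith)
      _ = (N + 1) * t ^ (-(1 + q)) := by simp
      _ ≤ (3 * t) * t ^ (-(1 + q)) := by gcongr; linarith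
      _ = 3 * t ^ (-q) := by
          rw [mul_assoc, ← rpow_one_add' ht0.le (by linarith), show 1 + -(1 + q) = -q by ring]
  have tail : ∀ m, ∑ k ∈ range m, max t ↑(N + 1 + k) ^ (-(1 + q)) ≤ q⁻¹ * t ^ (-q) := by
    intro m
    calc ∑ k ∈ range m, max t ↑(N + 1 + k) ^ (-(1 + q))
        ≤ ∑ k ∈ range m, q⁻¹ * (((N + k : ℕ) : ℝ) ^ (-q) - ((N + (k + 1) : ℕ) : ℝ) ^ (-q)) := by
          refine sum_le_sum fun k _ => ?_
          have hk : t ≤ ↑(N + 1 + k) := htN.trans (by push_cast; linarith)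
          rw [max_eq_right hk, le_inv_mul_iff₀ hq]
          have := mul_rpow_neg_le_rpow_neg_sub hq (a := ((N + k : ℕ) : ℝ)) (by positivity)
          push_cast at this ⊢
          rwa [show (N : ℝ) + 1 + k = N + k + 1 by ring, show (N : ℝ) + (k + 1) = N + k + 1 by ring]
      _ = q⁻¹ * (((N : ℕ) : ℝ) ^ (-q) - ((N + m : ℕ) : ℝ) ^ (-q)) := by
          rw [← mul_sum, sum_range_sub' (fun k => ((N + k : ℕ) : ℝ) ^ (-q))]; simp
      _ ≤ q⁻¹ * t ^ (-q) := by
          gcongr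
          linarith [rpow_nonneg (Nat.cast_nonneg (N + m)) (-q),
            rpow_le_rpow_of_nonpos ht0 htN (by linarith : -q ≤ 0)]
  calc ∑ k ∈ range K, max t k ^ (-(1 + q))
      ≤ ∑ k ∈ range (N + 1 + K), max t k ^ (-(1 + q)) :=
        sum_le_sum_of_subset_of_nonneg (range_mono (by omega)) fun k _ _ => hterm k
    _ ≤ 3 * t ^ (-q) + q⁻¹ * t ^ (-q) := by rw [sum_range_add]; exact add_le_add head (tail K)
    _ = (3 + q⁻¹) * t ^ (-q) := by ring

lemma ENNReal.tsum_max_rpow_neg_le {q t : ℝ} (hq : 0 < q) (ht : 1 ≤ t) :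
    ∑' k : ℕ, ENNReal.ofReal (max t k ^ (-(1 + q))) ≤ ENNReal.ofReal ((3 + q⁻¹) * t ^ (-q)) :=
  ENNReal.tsum_le_of_sum_range_le fun K => by
    rw [← ENNReal.ofReal_sum_of_nonneg fun k _ => rpow_nonneg (by positivity) _]
    exact ENNReal.ofReal_le_ofReal (sum_range_max_rpow_neg_le hq ht K)

lemma rpow_mul_card_le_prod {ι : Type*} (s : Finset ι) {a : ι → ℝ} {b r : ℝ} (hb : 0 ≤ b)
    (hr : r ≤ 0) (ha : ∀ j ∈ s, 0 < a j) (hab : ∀ j ∈ s, a j ≤ b) :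
    b ^ (r * #s) ≤ ∏ j ∈ s, a j ^ r := by
  rw [rpow_mul_natCast hb, ← prod_const]
  exact prod_le_prod (fun j _ => rpow_nonneg hb _)
    fun j hj => rpow_le_rpow_of_nonpos (ha j hj) (hab j hj) hr

lemma ENNReal.tsum_pi_prod_eq_prod_tsum {α : Type*} :
    ∀ {n : ℕ} (f : Fin n → α → ℝ≥0∞), ∑' x : Fin n → α, ∏ j, f j (x j) = ∏ j, ∑' a, f j a
  | 0, f => by simp
  | n + 1, f => by
    rw [← (Fin.consEquiv fun _ => α).tsum_eq, ENNReal.tsum_prod', Fin.prod_univ_succ]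
    simp [Fin.consEquiv, Fin.prod_univ_succ, ENNReal.tsum_mul_left, ENNReal.tsum_mul_right,
      ENNReal.tsum_pi_prod_eq_prod_tsum]

/-- A product-form majorant for `ℙ[0 ∈ y + U_{i,L(y)}, L(y) > t]`: the `i`-th coordinate of `y`
must vanish, and a coordinate `m < 0` contributes `max t (|m| - 1) ^ (-p)`. -/
noncomputable def umbrellaWeight {d : ℕ} (i : Fin d) (t p : ℝ) (j : Fin d) (m : ℤ) : ℝ≥0∞ :=
  if j = i then (if m = 0 then 1 else 0)
  else if m < 0 then ENNReal.ofReal (max t ((-m - 1 : ℤ) : ℝ) ^ (-p)) else 0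

section umbrellaWeight

variable {d : ℕ} (i : Fin d) (t p : ℝ)

lemma tsum_umbrellaWeight_self : ∑' m, umbrellaWeight i t p i m = 1 := by
  simp [umbrellaWeight]

lemma tsum_umbrellaWeight_of_ne {j : Fin d} (hj : j ≠ i) :
    ∑' m, umbrellaWeight i t p j m = ∑' k : ℕ, ENNReal.ofReal (max t k ^ (-p)) := by
  rw [tsum_of_nat_of_neg_add_one ENNReal.summable ENNReal.summable]
  have hnonneg (k : ℕ) : ¬ (k : ℤ) < 0 := by omega
  have hneg (k : ℕ) : -1 < (k : ℤ) := by omega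
  simp [umbrellaWeight, hj, hnonneg, hneg]

lemma prod_tsum_umbrellaWeight :
    ∏ j, ∑' m, umbrellaWeight i t p j m =
      (∑' k : ℕ, ENNReal.ofReal (max t k ^ (-p))) ^ (d - 1) := by
  rw [← mul_prod_erase univ _ (mem_univ i), tsum_umbrellaWeight_self, one_mul,
    prod_congr rfl fun j hj => tsum_umbrellaWeight_of_ne i t p (ne_of_mem_erase hj), prod_const,
    card_erase_of_mem (mem_univ i), card_univ, Fintype.card_fin]

lemma prod_umbrellaWeight_of_admissible (ht : 0 ≤ t) {y : Fin d → ℤ}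
    (hy : y i = 0 ∧ ∀ j ≠ i, y j < 0) :
    ∏ j, umbrellaWeight i t p j (y j) =
      ENNReal.ofReal (∏ j ∈ univ.erase i, max t ((-y j - 1 : ℤ) : ℝ) ^ (-p)) := by
  rw [← mul_prod_erase univ _ (mem_univ i), ENNReal.ofReal_prod_of_nonneg
    fun j _ => rpow_nonneg (ht.trans (le_max_left _ _)) _]
  simp only [umbrellaWeight, if_pos, hy.1, one_mul]
  exact prod_congr rfl fun j hj => by simp [ne_of_mem_erase hj, hy.2 j (ne_of_mem_erase hj)]

end umbrellaWeight

lemma measure_umbrella_le {Ω : Type*} [MeasurableSpace Ω] {μ : Measure Ω} {n : ℕ} (hn : 1 ≤ n)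
    {θ t : ℝ} (hθ : 0 ≤ θ) (ht : 0 < t) {X : Ω → ℝ}
    (htail : ∀ s, t ≤ s → μ {ω | s < X ω} = ENNReal.ofReal (θ * s ^ (-((n + 1 : ℕ) : ℝ))))
    (i : Fin (n + 1)) (y : Fin (n + 1) → ℤ) :
    μ {ω | ((-y) i = 0 ∧ ∀ j ≠ i, 0 < (-y) j ∧ ((-y) j : ℝ) ≤ X ω) ∧ t < X ω} ≤
      ENNReal.ofReal θ * ∏ j, umbrellaWeight i t (1 + (n : ℝ)⁻¹) j (y j) := by
  by_cases hy : y i = 0 ∧ ∀ j ≠ i, y j < 0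
  swap
  · refine (measure_mono_null (fun ω hω => ?_) measure_empty).trans_le zero_le
    simp only [Pi.neg_apply, neg_eq_zero, Left.neg_pos_iff, Set.mem_ofPred_eq] at hω
    exact hy ⟨hω.1.1, fun j hj => (hω.1.2 j hj).1⟩
  have herase : (univ.erase i).Nonempty := by
    rw [← card_pos, card_erase_of_mem (mem_univ i), card_univ, Fintype.card_fin]; omega
  obtain ⟨j₀, hj₀, hmax⟩ := (univ.erase i).exists_max_image (fun j => -y j) herase
  -- the `- 1` makes `|y_{j₀}| ≤ X` strict, to match the tail formula
  set s := max t ((-y j₀ - 1 : ℤ) : ℝ)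
  have hsub : {ω | ((-y) i = 0 ∧ ∀ j ≠ i, 0 < (-y) j ∧ ((-y) j : ℝ) ≤ X ω) ∧ t < X ω} ⊆
      {ω | s < X ω} := fun ω ⟨⟨_, hX⟩, htX⟩ =>
    max_lt htX <| by
      have := (hX j₀ (ne_of_mem_erase hj₀)).2
      push_cast [Pi.neg_apply] at this ⊢
      linarith
  have hexp : -((n + 1 : ℕ) : ℝ) = -(1 + (n : ℝ)⁻¹) * #(univ.erase i) := by
    rw [card_erase_of_mem (mem_univ i), card_univ, Fintype.card_fin]
    push_cast
    field_simp
  calc μ {ω | ((-y) i = 0 ∧ ∀ j ≠ i, 0 < (-y) j ∧ ((-y) j : ℝ) ≤ X ω) ∧ t < X ω}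
      ≤ μ {ω | s < X ω} := measure_mono hsub
    _ = ENNReal.ofReal (θ * s ^ (-((n + 1 : ℕ) : ℝ))) := htail s (le_max_left _ _)
    _ ≤ _ := by
      rw [prod_umbrellaWeight_of_admissible i t _ ht.le hy, ← ENNReal.ofReal_mul hθ, hexp]
      gcongr
      refine rpow_mul_card_le_prod _ (ht.le.trans (le_max_left _ _)) (neg_nonpos.2 (by positivity))
        (fun j _ => ht.trans_le (le_max_left _ _)) fun j hj => max_le_max le_rfl ?_
      have : ((-y j : ℤ) : ℝ) ≤ ((-y j₀ : ℤ) : ℝ) := by exact_mod_cast hmax j hj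
      push_cast at this ⊢; linarith

theorem stmt5_general (d : ℕ) (hd : 2 ≤ d) (n₀ : ℕ) (hn₀ : 1 ≤ n₀) (θ : ℝ) (hθ0 : 0 < θ)
    (Ω : Type) [MeasurableSpace Ω] (μ : Measure Ω)
    (L : (Fin d → ℤ) → Ω → ℝ)
    (hmeas : ∀ y, Measurable (L y))
    (hident : ∀ y, Measure.map (L y) μ = Measure.map (L 0) μ)
    (htail : ∀ t : ℝ, (n₀ : ℝ) ≤ t →
      μ {ω | t < L 0 ω} = ENNReal.ofReal (θ * t ^ (-(d : ℝ)))) :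
    ∃ c₃ : ℝ, 0 ≤ c₃ ∧ ∀ (i : Fin d) (t : ℝ), (n₀ : ℝ) < t →
      μ {ω | ∃ y : Fin d → ℤ,
          ((-y) i = 0 ∧ ∀ j ≠ i, 0 < (-y) j ∧ ((-y) j : ℝ) ≤ L y ω) ∧ t < L y ω} ≤
        ENNReal.ofReal (c₃ / t) := by
  obtain ⟨n, rfl⟩ : ∃ n, d = n + 1 := ⟨d - 1, by omega⟩
  refine ⟨θ * (3 + n) ^ n, by positivity, fun i t ht => ?_⟩
  have ht1 : 1 ≤ t := by linarith [(Nat.one_le_cast.2 hn₀ : (1 : ℝ) ≤ n₀)]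
  have htail_y (y) (s : ℝ) (hs : t ≤ s) :
      μ {ω | s < L y ω} = ENNReal.ofReal (θ * s ^ (-((n + 1 : ℕ) : ℝ))) := by
    rw [← htail s (by linarith)]
    exact IdentDistrib.measure_mem_eq
      ⟨(hmeas y).aemeasurable, (hmeas 0).aemeasurable, hident y⟩ measurableSet_Ioi
  have hn : (0 : ℝ) < n := by exact_mod_cast (by omega : 0 < n)
  calc μ {ω | ∃ y : Fin (n + 1) → ℤ,
          ((-y) i = 0 ∧ ∀ j ≠ i, 0 < (-y) j ∧ ((-y) j : ℝ) ≤ L y ω) ∧ t < L y ω}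
      ≤ ∑' y, μ {ω | ((-y) i = 0 ∧ ∀ j ≠ i, 0 < (-y) j ∧ ((-y) j : ℝ) ≤ L y ω) ∧ t < L y ω} := by
        rw [Set.ofPred_exists]; exact measure_iUnion_le _
    _ ≤ ∑' y, ENNReal.ofReal θ * ∏ j, umbrellaWeight i t (1 + (n : ℝ)⁻¹) j (y j) :=
        ENNReal.tsum_le_tsum fun y => by
          exact measure_umbrella_le (by omega) hθ0.le (by linarith) (htail_y y) i y
    _ = ENNReal.ofReal θ * (∑' k : ℕ, ENNReal.ofReal (max t k ^ (-(1 + (n : ℝ)⁻¹)))) ^ n := by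
        rw [ENNReal.tsum_mul_left, ENNReal.tsum_pi_prod_eq_prod_tsum, prod_tsum_umbrellaWeight,
          Nat.add_sub_cancel]
    _ ≤ ENNReal.ofReal θ * ENNReal.ofReal ((3 + n) * t ^ (-(n : ℝ)⁻¹)) ^ n := by
        gcongr; simpa using ENNReal.tsum_max_rpow_neg_le (inv_pos.2 hn) ht1
    _ = ENNReal.ofReal (θ * (3 + n) ^ n / t) := by
        rw [← ENNReal.ofReal_pow (by positivity), ← ENNReal.ofReal_mul hθ0.le, mul_pow,
          ← rpow_mul_natCast (by positivity), neg_mul, inv_mul_cancel₀ hn.ne', rpow_neg_one]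
        ring_nf

/-- Lemma 4 of Bramson–Zeitouni–Zerner: with i.i.d. umbrella lengths `L(y) > 1` having
atomless law and tail `ℙ[L(0) > t] = θ t^(-d)` for `t ≥ n₀` (where `n₀^d ≥ θ`), the
largest umbrella side through `0` in direction `i`, `λᵢ(0)`, satisfies
`ℙ[λᵢ(0) > t] ≤ c₃ / t` for all `t > n₀`. The event `λᵢ(0) > t` is expressed as the
existence of `y` with `0 ∈ y + U_{i,L(y)}` and `L(y) > t`. -/
theorem stmt5 (d : ℕ) (hd : 2 ≤ d) (n₀ : ℕ) (hn₀ : 1 ≤ n₀) (θ : ℝ) (hθ0 : 0 < θ)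
    (hθ : θ ≤ (n₀ : ℝ) ^ d)
    (Ω : Type) [MeasurableSpace Ω] (μ : Measure Ω) [IsProbabilityMeasure μ]
    (L : (Fin d → ℤ) → Ω → ℝ)
    (hmeas : ∀ y, Measurable (L y))
    (hindep : iIndepFun L μ)
    (hident : ∀ y, Measure.map (L y) μ = Measure.map (L 0) μ)
    (hgt1 : ∀ y, ∀ᵐ ω ∂μ, 1 < L y ω)
    (hatomless : ∀ t : ℝ, μ {ω | L 0 ω = t} = 0)
    (htail : ∀ t : ℝ, (n₀ : ℝ) ≤ t →
      μ {ω | t < L 0 ω} = ENNReal.ofReal (θ * t ^ (-(d : ℝ)))) :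
    ∃ c₃ : ℝ, 0 ≤ c₃ ∧ ∀ (i : Fin d) (t : ℝ), (n₀ : ℝ) < t →
      μ {ω | ∃ y : Fin d → ℤ,
          ((-y) i = 0 ∧ ∀ j ≠ i, 0 < (-y) j ∧ ((-y) j : ℝ) ≤ L y ω) ∧ t < L y ω} ≤
        ENNReal.ofReal (c₃ / t) :=
  stmt5_general d hd n₀ hn₀ θ hθ0 Ω μ L hmeas hident htail
end

section
/- In the umbrella construction: with λᵢ as above and I(z) ∈ {1,…,d} the a.s.-unique index minimizing λᵢ(z), there exists c₇ < ∞ such that for all i ∈ {1,…,d}, all t > n₀, and all z ∈ U_{i,t}, one has ℙ[I(z) = i, L(0) > t] ≤ c₇ t^{−2d+1}. -/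
/-!
On the event, `L 0 > t` and, unless `λᵢ(z) = ∞`, every `λⱼ(z)` with `j ≠ i` exceeds
`λᵢ(z) ≥ L 0 > t`, so some umbrella in direction `j` of height `≥ t` covers `z`. The bases of
umbrellas covering `z` in direction `j` lie in the translated orthant `z - orthant j`; these are
pairwise disjoint, with `0` in the one for `i`. So the `d` events are independent. The first has
probability `θ t^(-d)`, each of the others at most `4dθ/t` by a union bound over bases sorted by
their sup-norm distance `M + 1` to `z` (at most `(d-1)(M+1)^(d-2)` of them). The same bound with
`t → ∞` shows that `λᵢ(z) < ∞` almost surely.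
-/

open MeasureTheory ProbabilityTheory Function
open scoped ENNReal

section Counting

open Finset

lemma card_filter_sup_eq_le {K : Type*} [Fintype K] [DecidableEq K] [Nonempty K] (M : ℕ) :
    #{v ∈ Fintype.piFinset (fun _ : K => range (M + 1)) | univ.sup v = M} ≤
      Fintype.card K * (M + 1) ^ (Fintype.card K - 1) := by
  set box : K → Finset (K → ℕ) := fun k =>
    Fintype.piFinset fun k' => if k' = k then {M} else range (M + 1)
  have hsub : {v ∈ Fintype.piFinset (fun _ : K => range (M + 1)) | univ.sup v = M} ⊆
      univ.biUnion box := by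
    intro v hv
    obtain ⟨-, hvM⟩ := mem_filter.1 hv
    obtain ⟨k, -, hk⟩ := exists_mem_eq_sup univ univ_nonempty v
    refine mem_biUnion.2 ⟨k, mem_univ k, Fintype.mem_piFinset.2 fun k' => ?_⟩
    split_ifs with h
    · simp [h, ← hk, hvM]
    · exact mem_range_succ_iff.2 (hvM ▸ le_sup (mem_univ k'))
  have hbox : ∀ k, #(box k) = (M + 1) ^ (Fintype.card K - 1) := by
    intro k
    simp [box, Fintype.card_piFinset, apply_ite Finset.card, prod_ite, filter_ne']
  calc _ ≤ #(univ.biUnion box) := card_le_card hsub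
    _ ≤ ∑ k, #(box k) := card_biUnion_le
    _ = _ := by simp [hbox]

lemma tsum_comp_sup_le {K : Type*} [Fintype K] [DecidableEq K] [Nonempty K] (f : ℕ → ℝ≥0∞) :
    ∑' v : K → ℕ, f (univ.sup v) ≤
      ∑' M : ℕ, ((Fintype.card K * (M + 1) ^ (Fintype.card K - 1) : ℕ) : ℝ≥0∞) * f M := by
  calc ∑' v : K → ℕ, f (univ.sup v)
      = ∑' M : ℕ, ∑' v : K → ℕ, if M = univ.sup v then f M else 0 := by
        rw [ENNReal.tsum_comm]
        exact tsum_congr fun v => (tsum_ite_eq (univ.sup v) f).symm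
    _ ≤ _ := by
      refine ENNReal.tsum_le_tsum fun M => ?_
      rw [tsum_eq_sum (s := {v ∈ Fintype.piFinset (fun _ : K => range (M + 1)) | univ.sup v = M})]
      · rw [sum_ite_of_true (fun v hv => (mem_filter.1 hv).2.symm), sum_const, nsmul_eq_mul]
        gcongr
        exact card_filter_sup_eq_le M
      · intro v hv
        refine if_neg fun hvM => hv (mem_filter.2 ⟨Fintype.mem_piFinset.2 fun k => ?_, hvM.symm⟩)
        exact mem_range_succ_iff.2 (hvM ▸ le_sup (mem_univ k))

lemma tsum_inv_max_sq_le {s : ℝ} (hs : 0 < s) :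
    ∑' M : ℕ, ENNReal.ofReal (max s (M + 1) ^ 2)⁻¹ ≤ ENNReal.ofReal (4 / s) := by
  -- `max s (M + 1) ≥ (s + M + 1) / 2`, which makes the terms telescope.
  have hterm : ∀ M : ℕ, (max s (M + 1) ^ 2)⁻¹ ≤ 4 / (s + M) - 4 / (s + (M + 1 : ℕ)) := by
    intro M
    have hM : (0 : ℝ) ≤ M := M.cast_nonneg
    have hmax : s + M + 1 ≤ 2 * max s (M + 1) := by
      linarith [le_max_left s (M + 1), le_max_right s ((M : ℝ) + 1)]
    rw [show 4 / (s + M) - 4 / (s + (M + 1 : ℕ)) = 4 / ((s + M) * (s + M + 1)) by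
      push_cast; field_simp; ring]
    rw [inv_eq_one_div, div_le_div_iff₀ (by positivity) (by positivity)]
    nlinarith
  refine ENNReal.tsum_le_of_sum_range_le fun n => ?_
  rw [← ENNReal.ofReal_sum_of_nonneg fun _ _ => by positivity]
  refine ENNReal.ofReal_le_ofReal ?_
  calc ∑ M ∈ range n, (max s (M + 1) ^ 2)⁻¹
      ≤ ∑ M ∈ range n, (4 / (s + M) - 4 / (s + (M + 1 : ℕ))) :=
        sum_le_sum fun M _ => hterm M
    _ = 4 / s - 4 / (s + n) := by rw [sum_range_sub' (fun M : ℕ => 4 / (s + M))]; simp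
    _ ≤ 4 / s := by linarith [show 0 ≤ 4 / (s + n) by positivity]

lemma tsum_inv_max_sup_pow_le {K : Type*} [Fintype K] [DecidableEq K] [Nonempty K] {s : ℝ}
    (hs : 0 < s) :
    ∑' v : K → ℕ, ENNReal.ofReal (max s ((univ.sup v : ℕ) + 1) ^ (Fintype.card K + 1))⁻¹ ≤
      ENNReal.ofReal (4 * Fintype.card K / s) := by
  obtain ⟨e, he⟩ : ∃ e, Fintype.card K = e + 1 := Nat.exists_eq_add_one.2 Fintype.card_pos
  have hterm : ∀ M : ℕ, ((Fintype.card K * (M + 1) ^ (Fintype.card K - 1) : ℕ) : ℝ≥0∞) *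
      ENNReal.ofReal (max s (M + 1) ^ (Fintype.card K + 1))⁻¹ ≤
      ENNReal.ofReal (Fintype.card K) * ENNReal.ofReal (max s (M + 1) ^ 2)⁻¹ := by
    intro M
    have hm : 0 < max s (M + 1) := lt_max_of_lt_left hs
    rw [← ENNReal.ofReal_natCast, ← ENNReal.ofReal_mul (by positivity),
      ← ENNReal.ofReal_mul (by positivity)]
    refine ENNReal.ofReal_le_ofReal ?_
    have hpow : ((M : ℝ) + 1) ^ e / max s (M + 1) ^ e ≤ 1 :=
      div_le_one_of_le₀ (by gcongr; exact le_max_right _ _) (by positivity)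
    rw [he, Nat.add_sub_cancel, show e + 1 + 1 = e + 2 by rfl, pow_add]
    push_cast
    calc ((e : ℝ) + 1) * ((M : ℝ) + 1) ^ e * (max s (M + 1) ^ e * max s (M + 1) ^ 2)⁻¹
        = (e + 1) * ((M + 1) ^ e / max s (M + 1) ^ e) * (max s (M + 1) ^ 2)⁻¹ := by ring
      _ ≤ (e + 1) * 1 * (max s (M + 1) ^ 2)⁻¹ := by gcongr
      _ = _ := by ring
  calc _ ≤ _ := tsum_comp_sup_le fun M => ENNReal.ofReal (max s (M + 1) ^ (Fintype.card K + 1))⁻¹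
    _ ≤ ∑' M : ℕ, ENNReal.ofReal (Fintype.card K) * ENNReal.ofReal (max s (M + 1) ^ 2)⁻¹ :=
      ENNReal.tsum_le_tsum hterm
    _ ≤ ENNReal.ofReal (Fintype.card K) * ENNReal.ofReal (4 / s) := by
      rw [ENNReal.tsum_mul_left]; gcongr; exact tsum_inv_max_sq_le hs
    _ = _ := by rw [← ENNReal.ofReal_mul (by positivity)]; ring_nf

end Counting

lemma measure_biInter_eq_prod_of_iIndep {Ω ι κ : Type*} {mΩ : MeasurableSpace Ω}
    {μ : Measure Ω} [IsProbabilityMeasure μ] {m : ι → MeasurableSpace Ω} (h_le : ∀ y, m y ≤ mΩ)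
    (h_indep : iIndep m μ)
    {T : κ → Set ι} (hT : Pairwise (Disjoint on T)) {A : κ → Set Ω}
    (hA : ∀ j, MeasurableSet[⨆ y ∈ T j, m y] (A j)) (s : Finset κ) :
    μ (⋂ j ∈ s, A j) = ∏ j ∈ s, μ (A j) := by
  classical
  induction s using Finset.induction_on with
  | empty => simp
  | @insert a s ha ih =>
    have hindep : Indep (⨆ y ∈ T a, m y) (⨆ y ∈ ⋃ j ∈ s, T j, m y) μ :=
      indep_iSup_of_disjoint h_le h_indep <| Set.disjoint_iUnion₂_right.2 fun j hj =>
        hT fun h => ha (h ▸ hj)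
    have hmeas : MeasurableSet[⨆ y ∈ ⋃ j ∈ s, T j, m y] (⋂ j ∈ s, A j) :=
      MeasurableSet.biInter s.countable_toSet fun j hj =>
        (biSup_mono (f := m) fun y hy => Set.mem_biUnion hj hy :
          (⨆ y ∈ T j, m y) ≤ ⨆ y ∈ ⋃ j ∈ s, T j, m y) _ (hA j)
    rw [Finset.set_biInter_insert, Finset.prod_insert ha,
      (Indep_iff _ _ _).1 hindep _ _ (hA a) hmeas, ih]

section Umbrella

variable {d : ℕ}

/-- `InUmbrella j x r` says `x ∈ U_{j,r}`; `sSup (umbrellaSet L j z ω)` is `λⱼ(z)`. -/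
def InUmbrella (j : Fin d) (x : Fin d → ℤ) (r : ℝ) : Prop :=
  x j = 0 ∧ ∀ k ≠ j, 0 < x k ∧ ((x k : ℤ) : ℝ) ≤ r

def orthant (j : Fin d) : Set (Fin d → ℤ) := {x | x j = 0 ∧ ∀ k ≠ j, 0 < x k}

def orthantPoint (j : Fin d) (v : {k // k ≠ j} → ℕ) : Fin d → ℤ :=
  fun k => if h : k = j then 0 else v ⟨k, h⟩ + 1

variable {j : Fin d} {x : Fin d → ℤ} {r s : ℝ}

lemma InUmbrella.mono (h : InUmbrella j x r) (hrs : r ≤ s) : InUmbrella j x s :=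
  ⟨h.1, fun k hk => ⟨(h.2 k hk).1, (h.2 k hk).2.trans hrs⟩⟩

lemma InUmbrella.mem_orthant (h : InUmbrella j x r) : x ∈ orthant j :=
  ⟨h.1, fun k hk => (h.2 k hk).1⟩

lemma pairwise_disjoint_orthant : Pairwise (Disjoint on fun j : Fin d => orthant j) :=
  fun j _ hjj' => Set.disjoint_left.2 fun _ hx hx' => (hx'.2 j hjj').ne' hx.1

lemma InUmbrella.exists_orthantPoint [Nonempty {k // k ≠ j}] (h : InUmbrella j x r) :
    ∃ v, orthantPoint j v = x ∧ ((Finset.univ.sup v : ℕ) : ℝ) + 1 ≤ r := by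
  refine ⟨fun k => (x k - 1).toNat, funext fun k => ?_, ?_⟩
  · by_cases hk : k = j
    · simp [orthantPoint, hk, h.1]
    · have := (h.2 k hk).1
      simp only [orthantPoint, dif_neg hk]
      omega
  · obtain ⟨k, -, hk⟩ := Finset.exists_mem_eq_sup Finset.univ Finset.univ_nonempty
      fun k : {k // k ≠ j} => (x k - 1).toNat
    obtain ⟨hpos, hle⟩ := h.2 k k.2
    rw [hk]
    have hcast : (((x k - 1).toNat : ℕ) : ℝ) + 1 = ((x k : ℤ) : ℝ) := by
      rw [← Int.cast_natCast, Int.toNat_of_nonneg (by omega)]; push_cast; ring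
    exact hcast ▸ hle

variable {Ω : Type*}

def umbrellaSet (L : (Fin d → ℤ) → Ω → ℝ) (j : Fin d) (z : Fin d → ℤ) (ω : Ω) : Set ℝ :=
  {r | ∃ y, r = L y ω ∧ InUmbrella j (z - y) (L y ω)}

def coveringEvent (L : (Fin d → ℤ) → Ω → ℝ) (j : Fin d) (z : Fin d → ℤ) (s : ℝ) : Set Ω :=
  {ω | ∃ y, InUmbrella j (z - y) (L y ω) ∧ s ≤ L y ω}

variable {L : (Fin d → ℤ) → Ω → ℝ}

lemma measurableSet_coveringEvent (j : Fin d) (z : Fin d → ℤ) (s : ℝ) :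
    MeasurableSet[⨆ y ∈ (z - ·) ⁻¹' orthant j, MeasurableSpace.comap (L y) inferInstance]
      (coveringEvent L j z s) := by
  have hunion : coveringEvent L j z s =
      ⋃ y ∈ (z - ·) ⁻¹' orthant j, L y ⁻¹' {r | InUmbrella j (z - y) r ∧ s ≤ r} := by
    ext ω
    simp only [coveringEvent, Set.mem_iUnion, Set.mem_preimage, exists_prop]
    exact ⟨fun ⟨y, hy, hs⟩ => ⟨y, hy.mem_orthant, hy, hs⟩, fun ⟨y, _, hy⟩ => ⟨y, hy⟩⟩
  have hupper (y : Fin d → ℤ) : IsUpperSet {r | InUmbrella j (z - y) r ∧ s ≤ r} :=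
    fun _ _ hab h => ⟨h.1.mono hab, h.2.trans hab⟩
  rw [hunion]
  refine MeasurableSet.biUnion (Set.to_countable _) fun y hy => ?_
  exact le_iSup₂ (f := fun y (_ : y ∈ (z - ·) ⁻¹' orthant j) =>
    MeasurableSpace.comap (L y) inferInstance) y hy _
    ⟨_, (hupper y).ordConnected.measurableSet, rfl⟩

lemma setOf_lt_umbrellaSup_subset {i : Fin d} {z : Fin d → ℤ} {t : ℝ} (ht : 0 ≤ t)
    (hz : InUmbrella i z t) :
    {ω | (∀ j ≠ i, sSup (umbrellaSet L i z ω) < sSup (umbrellaSet L j z ω)) ∧ t < L 0 ω} ⊆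
      {ω | ¬BddAbove (umbrellaSet L i z ω)} ∪
        ⋂ j, update (fun j => coveringEvent L j z t) i {ω | t < L 0 ω} j := by
  rintro ω ⟨hlt, h0⟩
  -- An unbounded set has the junk supremum `0`, so that case must be excluded separately.
  by_cases hbdd : BddAbove (umbrellaSet L i z ω)
  · refine Or.inr (Set.mem_iInter.2 fun j => ?_)
    rcases eq_or_ne j i with rfl | hj
    · simpa using h0
    · have hL0 : L 0 ω ∈ umbrellaSet L i z ω := ⟨0, rfl, by simpa using hz.mono h0.le⟩
      have htj : t < sSup (umbrellaSet L j z ω) :=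
        (h0.trans_le (le_csSup hbdd hL0)).trans (hlt j hj)
      have hne : (umbrellaSet L j z ω).Nonempty :=
        Set.nonempty_iff_ne_empty.2 fun he => by simp [he] at htj; linarith
      obtain ⟨_, ⟨y, rfl, hy⟩, hty⟩ := exists_lt_of_lt_csSup hne htj
      rw [update_of_ne hj]
      exact ⟨y, hy, hty.le⟩
  · exact Or.inl hbdd

variable [MeasurableSpace Ω] {n₀ : ℕ} {θ : ℝ} {μ : Measure Ω}

lemma measure_setOf_le_apply_le (hmeas : ∀ y, Measurable (L y))
    (hident : ∀ y, Measure.map (L y) μ = Measure.map (L 0) μ)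
    (hatomless : ∀ t : ℝ, μ {ω | L 0 ω = t} = 0)
    (htail : ∀ t : ℝ, (n₀ : ℝ) ≤ t → μ {ω | t < L 0 ω} = ENNReal.ofReal (θ * t ^ (-(d : ℝ))))
    (y : Fin d → ℤ) {c : ℝ} (hc : (n₀ : ℝ) ≤ c) :
    μ {ω | c ≤ L y ω} ≤ ENNReal.ofReal (θ * c ^ (-(d : ℝ))) := by
  have hIci : μ {ω | c ≤ L y ω} = μ {ω | c ≤ L 0 ω} := by
    change μ (L y ⁻¹' Set.Ici c) = μ (L 0 ⁻¹' Set.Ici c)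
    rw [← Measure.map_apply (hmeas y) measurableSet_Ici, hident y,
      Measure.map_apply (hmeas 0) measurableSet_Ici]
  have hsplit : {ω | c ≤ L 0 ω} ⊆ {ω | L 0 ω = c} ∪ {ω | c < L 0 ω} := fun ω hω =>
    (eq_or_lt_of_le hω).imp Eq.symm id
  calc μ {ω | c ≤ L y ω} ≤ μ {ω | L 0 ω = c} + μ {ω | c < L 0 ω} :=
        hIci ▸ (measure_mono hsplit).trans (measure_union_le _ _)
    _ = _ := by rw [hatomless, htail c hc, zero_add]

lemma measure_iInter_update_coveringEvent [IsProbabilityMeasure μ]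
    (hmeas : ∀ y, Measurable (L y)) (hindep : iIndepFun L μ) {i : Fin d} {z : Fin d → ℤ}
    {t : ℝ} (hz : InUmbrella i z t) :
    μ (⋂ j, update (fun j => coveringEvent L j z t) i {ω | t < L 0 ω} j) =
      μ {ω | t < L 0 ω} * ∏ j ∈ Finset.univ.erase i, μ (coveringEvent L j z t) := by
  set A := update (fun j => coveringEvent L j z t) i {ω | t < L 0 ω}
  have hA (j : Fin d) : MeasurableSet[⨆ y ∈ (z - ·) ⁻¹' orthant j,
      MeasurableSpace.comap (L y) inferInstance] (A j) := by
    rcases eq_or_ne j i with rfl | hj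
    · exact le_iSup₂ (f := fun y (_ : y ∈ (z - ·) ⁻¹' orthant j) =>
        MeasurableSpace.comap (L y) inferInstance) 0 (by simpa using hz.mem_orthant) _
        ⟨Set.Ioi t, measurableSet_Ioi, by simp [A]; rfl⟩
    · simpa [A, update_of_ne hj] using measurableSet_coveringEvent j z t
  have herase : ∀ j ∈ Finset.univ.erase i, μ (A j) = μ (coveringEvent L j z t) :=
    fun j hj => by simp only [A, update_of_ne (Finset.ne_of_mem_erase hj)]
  have hprod := measure_biInter_eq_prod_of_iIndep (fun y => (hmeas y).comap_le) hindep.iIndep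
    (fun _ _ h => (pairwise_disjoint_orthant h).preimage (z - ·)) hA Finset.univ
  simp only [Finset.mem_univ, Set.iInter_true] at hprod
  rw [hprod, ← Finset.mul_prod_erase Finset.univ _ (Finset.mem_univ i),
    Finset.prod_congr rfl herase]
  simp only [A, update_self]

variable (htail : ∀ y (c : ℝ), (n₀ : ℝ) ≤ c →
  μ {ω | c ≤ L y ω} ≤ ENNReal.ofReal (θ * c ^ (-(d : ℝ))))
include htail

lemma measure_coveringEvent_le (hd : 2 ≤ d) (hθ : 0 ≤ θ) (j : Fin d) (z : Fin d → ℤ)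
    (hs : (n₀ : ℝ) ≤ s) (hs0 : 0 < s) :
    μ (coveringEvent L j z s) ≤ ENNReal.ofReal (4 * d * θ / s) := by
  have hcard : Fintype.card {k // k ≠ j} + 1 = d := by simp; omega
  have : Nonempty {k // k ≠ j} := Fintype.card_pos_iff.1 (by omega)
  have hcover : coveringEvent L j z s ⊆ ⋃ v, {ω | max s ((Finset.univ.sup v : ℕ) + 1) ≤
      L (z - orthantPoint j v) ω} := by
    rintro ω ⟨y, hy, hsy⟩
    obtain ⟨v, hv, hvy⟩ := hy.exists_orthantPoint
    exact Set.mem_iUnion.2 ⟨v, by rw [hv, sub_sub_cancel]; exact max_le hsy hvy⟩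
  calc μ (coveringEvent L j z s)
      ≤ ∑' v, ENNReal.ofReal θ * ENNReal.ofReal
          (max s ((Finset.univ.sup v : ℕ) + 1) ^ (Fintype.card {k // k ≠ j} + 1))⁻¹ := by
        refine (measure_mono hcover).trans <| (measure_iUnion_le _).trans <|
          ENNReal.tsum_le_tsum fun v => (htail _ _ (hs.trans (le_max_left _ _))).trans_eq ?_
        rw [← ENNReal.ofReal_mul hθ, Real.rpow_neg (hs0.le.trans (le_max_left _ _)), hcard,
          Real.rpow_natCast]
    _ ≤ ENNReal.ofReal θ * ENNReal.ofReal (4 * Fintype.card {k // k ≠ j} / s) := by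
        rw [ENNReal.tsum_mul_left]; gcongr; exact tsum_inv_max_sup_pow_le hs0
    _ ≤ ENNReal.ofReal (4 * d * θ / s) := by
        rw [← ENNReal.ofReal_mul hθ]
        refine ENNReal.ofReal_le_ofReal ?_
        have hK : (Fintype.card {k // k ≠ j} : ℝ) ≤ d := by
          exact_mod_cast (show Fintype.card {k // k ≠ j} ≤ d by omega)
        rw [mul_div_assoc', div_le_div_iff_of_pos_right hs0]
        nlinarith

lemma ae_bddAbove_umbrellaSet (hd : 2 ≤ d) (hθ : 0 ≤ θ) (j : Fin d) (z : Fin d → ℤ) :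
    ∀ᵐ ω ∂μ, BddAbove (umbrellaSet L j z ω) := by
  have hcover : ∀ n : ℕ, {ω | ¬BddAbove (umbrellaSet L j z ω)} ⊆ coveringEvent L j z n := by
    intro n ω hω
    obtain ⟨_, ⟨y, rfl, hy⟩, hny⟩ := not_bddAbove_iff.1 hω n
    exact ⟨y, hy, hny.le⟩
  have hlim : Filter.Tendsto (fun n : ℕ => ENNReal.ofReal (4 * d * θ / n)) Filter.atTop
      (nhds 0) := by
    simpa using ENNReal.tendsto_ofReal (tendsto_const_div_atTop_nhds_zero_nat (4 * d * θ))
  refine ae_iff.2 <| le_antisymm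
    (ge_of_tendsto hlim (Filter.eventually_atTop.2 ⟨n₀ + 1, ?_⟩)) bot_le
  intro n hn
  have hn' : (n₀ : ℝ) + 1 ≤ n := by exact_mod_cast hn
  exact (measure_mono (hcover n)).trans <| measure_coveringEvent_le htail hd hθ j z
    (by linarith) (by linarith [(n₀.cast_nonneg : (0 : ℝ) ≤ n₀)])

end Umbrella

lemma mul_rpow_neg_mul_div_pow {d : ℕ} (hd : 1 ≤ d) {t : ℝ} (ht : 0 < t) (a b : ℝ) :
    a * t ^ (-(d : ℝ)) * (b / t) ^ (d - 1) = a * b ^ (d - 1) * t ^ (-2 * (d : ℝ) + 1) := by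
  rw [div_pow, ← Real.rpow_natCast t (d - 1), Nat.cast_sub hd, Nat.cast_one,
    show -2 * (d : ℝ) + 1 = -(d : ℝ) - (d - 1) by ring, Real.rpow_sub ht (-(d : ℝ))]
  ring

theorem stmt6_general (d : ℕ) (hd : 2 ≤ d) (n₀ : ℕ) (θ : ℝ) (hθ0 : 0 < θ)
    (Ω : Type) [MeasurableSpace Ω] (μ : Measure Ω) [IsProbabilityMeasure μ]
    (L : (Fin d → ℤ) → Ω → ℝ)
    (hmeas : ∀ y, Measurable (L y))
    (hindep : iIndepFun L μ)
    (hident : ∀ y, Measure.map (L y) μ = Measure.map (L 0) μ)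
    (hatomless : ∀ t : ℝ, μ {ω | L 0 ω = t} = 0)
    (htail : ∀ t : ℝ, (n₀ : ℝ) ≤ t →
      μ {ω | t < L 0 ω} = ENNReal.ofReal (θ * t ^ (-(d : ℝ)))) :
    ∃ c₇ : ℝ, 0 ≤ c₇ ∧ ∀ (i : Fin d) (t : ℝ) (z : Fin d → ℤ), (n₀ : ℝ) < t →
      (z i = 0 ∧ ∀ j ≠ i, 0 < z j ∧ ((z j : ℤ) : ℝ) ≤ t) →
      μ {ω | (∀ j ≠ i,
            sSup {r : ℝ | ∃ y : Fin d → ℤ, r = L y ω ∧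
              ((z - y) i = 0 ∧ ∀ k ≠ i, 0 < (z - y) k ∧ (((z - y) k : ℤ) : ℝ) ≤ L y ω)} <
            sSup {r : ℝ | ∃ y : Fin d → ℤ, r = L y ω ∧
              ((z - y) j = 0 ∧ ∀ k ≠ j, 0 < (z - y) k ∧ (((z - y) k : ℤ) : ℝ) ≤ L y ω)}) ∧
          t < L 0 ω} ≤
        ENNReal.ofReal (c₇ * t ^ (-2 * (d : ℝ) + 1)) := by
  have htail' := measure_setOf_le_apply_le hmeas hident hatomless htail
  refine ⟨θ * (4 * d * θ) ^ (d - 1), by positivity, fun i t z ht hz => ?_⟩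
  have ht0 : 0 < t := n₀.cast_nonneg.trans_lt ht
  calc _ ≤ μ {ω | ¬BddAbove (umbrellaSet L i z ω)} +
        μ (⋂ j, update (fun j => coveringEvent L j z t) i {ω | t < L 0 ω} j) :=
        (measure_mono (setOf_lt_umbrellaSup_subset ht0.le hz)).trans (measure_union_le _ _)
    _ = μ {ω | t < L 0 ω} * ∏ j ∈ Finset.univ.erase i, μ (coveringEvent L j z t) := by
        rw [ae_iff.1 (ae_bddAbove_umbrellaSet htail' hd hθ0.le i z), zero_add,
          measure_iInter_update_coveringEvent hmeas hindep hz]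
    _ ≤ ENNReal.ofReal (θ * t ^ (-(d : ℝ))) *
          ∏ _j ∈ Finset.univ.erase i, ENNReal.ofReal (4 * d * θ / t) := by
        rw [htail t ht.le]
        gcongr with j
        exact measure_coveringEvent_le htail' hd hθ0.le j z ht.le ht0
    _ = _ := by
        rw [Finset.prod_const, Finset.card_erase_of_mem (Finset.mem_univ i), Finset.card_univ,
          Fintype.card_fin, ← ENNReal.ofReal_pow (by positivity),
          ← ENNReal.ofReal_mul (by positivity), mul_rpow_neg_mul_div_pow (by omega) ht0]

/-- Lemma 5 of Bramson–Zeitouni–Zerner: with i.i.d. umbrella lengths as in Lemma 4 and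
`λⱼ(z)` the largest umbrella side through `z` in direction `j`, there is `c₇ < ∞` such
that for all `i`, all `t > n₀` and all `z ∈ U_{i,t}`,
`ℙ[I(z) = i, L(0) > t] ≤ c₇ t^(-2d+1)`, where `I(z) = i` means `λᵢ(z)` is the strict
minimum of the `λⱼ(z)`. -/
theorem stmt6 (d : ℕ) (hd : 2 ≤ d) (n₀ : ℕ) (hn₀ : 1 ≤ n₀) (θ : ℝ) (hθ0 : 0 < θ)
    (hθ : θ ≤ (n₀ : ℝ) ^ d)
    (Ω : Type) [MeasurableSpace Ω] (μ : Measure Ω) [IsProbabilityMeasure μ]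
    (L : (Fin d → ℤ) → Ω → ℝ)
    (hmeas : ∀ y, Measurable (L y))
    (hindep : iIndepFun L μ)
    (hident : ∀ y, Measure.map (L y) μ = Measure.map (L 0) μ)
    (hgt1 : ∀ y, ∀ᵐ ω ∂μ, 1 < L y ω)
    (hatomless : ∀ t : ℝ, μ {ω | L 0 ω = t} = 0)
    (htail : ∀ t : ℝ, (n₀ : ℝ) ≤ t →
      μ {ω | t < L 0 ω} = ENNReal.ofReal (θ * t ^ (-(d : ℝ)))) :
    ∃ c₇ : ℝ, 0 ≤ c₇ ∧ ∀ (i : Fin d) (t : ℝ) (z : Fin d → ℤ), (n₀ : ℝ) < t →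
      (z i = 0 ∧ ∀ j ≠ i, 0 < z j ∧ ((z j : ℤ) : ℝ) ≤ t) →
      μ {ω | (∀ j ≠ i,
            sSup {r : ℝ | ∃ y : Fin d → ℤ, r = L y ω ∧
              ((z - y) i = 0 ∧ ∀ k ≠ i, 0 < (z - y) k ∧ (((z - y) k : ℤ) : ℝ) ≤ L y ω)} <
            sSup {r : ℝ | ∃ y : Fin d → ℤ, r = L y ω ∧
              ((z - y) j = 0 ∧ ∀ k ≠ j, 0 < (z - y) k ∧ (((z - y) k : ℤ) : ℝ) ≤ L y ω)}) ∧
          t < L 0 ω} ≤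
        ENNReal.ofReal (c₇ * t ^ (-2 * (d : ℝ) + 1)) :=
  stmt6_general d hd n₀ θ hθ0 Ω μ L hmeas hindep hident hatomless htail
end

section
/- (Tail bound for the insulation radius.) Let d ≥ 2, 0 < β < (d−2)/(2d), and let (h(y))_{y∈ℤ^d} be a stationary family of nonnegative random variables satisfying ℙ[h(0) ≥ n] ≤ C n^{1−d} for all n ≥ 1. Define H(x) = sup{h(y) : |x − y|₁ ≤ h(y)^β}. Then limsup_{n→∞} n^{(1−β)d−1} ℙ[H(0) ≥ n] < ∞. -/
open MeasureTheory Filter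
open scoped ENNReal

/-!
If `H(0) ≥ n`, some site `y` has `h(y) ≥ max(n/2, |y|₁^(1/β))`. A union bound, stationarity and
`#{y ∈ ℤᵈ : |y|₁ = m} ≤ 2(2m+1)^(d-1)` give
`ℙ[H(0) ≥ n] ≤ ∑ₘ 2(2m+1)^(d-1) ℙ[h(0) ≥ max(n/2, m^(1/β))]`.
The `≲ n^β` terms with `m ≤ n^β` are each `≲ n^(β(d-1)) n^(1-d)` by the tail bound at level
`n/2`; the terms with `m > n^β` are `≲ m^((d-1)(1-1/β))` by the tail bound at level `m^(1/β)`,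
and as `βd < d - 1` their sum is bounded by an integral, `≲ n^(βd+1-d)`.
Both parts are `O(n^(1-(1-β)d))`.
-/

noncomputable def insulationRadius {d : ℕ} (β : ℝ) (h : (Fin d → ℤ) → ℝ) : ℝ :=
  sSup {r : ℝ | ∃ y : Fin d → ℤ, r = h y ∧ ((∑ i, |y i| : ℤ) : ℝ) ≤ h y ^ β}

lemma exists_lt_of_lt_insulationRadius {d : ℕ} {β : ℝ} (hβ : 0 < β) {h : (Fin d → ℤ) → ℝ}
    (hh : ∀ y, 0 ≤ h y) {s : ℝ} (hs : 0 ≤ s) (hsH : s < insulationRadius β h) :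
    ∃ y, s < h y ∧ ((∑ i, (y i).natAbs : ℕ) : ℝ) ^ β⁻¹ ≤ h y := by
  have hne : {r : ℝ | ∃ y : Fin d → ℤ, r = h y ∧ ((∑ i, |y i| : ℤ) : ℝ) ≤ h y ^ β}.Nonempty :=
    Set.nonempty_iff_ne_empty.2 fun hempty ↦ by
      rw [insulationRadius, hempty, Real.sSup_empty] at hsH
      linarith
  obtain ⟨_, ⟨y, rfl, hy⟩, hsy⟩ := exists_lt_of_lt_csSup hne hsH
  refine ⟨y, hsy, (Real.rpow_inv_le_iff_of_pos (by positivity) (hh y) hβ).2 ?_⟩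
  push_cast [Nat.cast_natAbs]
  exact_mod_cast hy

def l1SphereCardBound (k m : ℕ) : ℕ := 2 * (2 * m + 1) ^ k

lemma tsum_comp_sum_natAbs_le (k : ℕ) (f : ℕ → ℝ≥0∞) :
    ∑' y : Fin (k + 1) → ℤ, f (∑ i, (y i).natAbs) ≤
      ∑' m : ℕ, (l1SphereCardBound k m : ℝ≥0∞) * f m := by
  classical
  let box (m : ℕ) : Finset ((Fin k → ℤ) × Bool) :=
    Fintype.piFinset (fun _ ↦ Finset.Icc (-(m : ℤ)) m) ×ˢ Finset.univ
  -- `y` is determined by its ℓ¹ norm, its first `k` coordinates and the sign of its last one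
  let ι (y : Fin (k + 1) → ℤ) : ℕ × (Fin k → ℤ) × Bool :=
    (∑ i, (y i).natAbs, Fin.init y, decide (0 ≤ y (Fin.last k)))
  let g (p : ℕ × (Fin k → ℤ) × Bool) : ℝ≥0∞ := if p.2 ∈ box p.1 then f p.1 else 0
  have hι : ι.Injective := by
    intro y y' hyy
    simp only [ι, Prod.mk.injEq, decide_eq_decide] at hyy
    obtain ⟨hnorm, hinit, hsign⟩ := hyy
    have hinit' (i : Fin k) : y i.castSucc = y' i.castSucc := congrFun hinit i
    rw [Fin.sum_univ_castSucc, Fin.sum_univ_castSucc, Finset.sum_congr rfl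
      fun i _ ↦ congrArg Int.natAbs (hinit' i)] at hnorm
    have hlast : y (Fin.last k) = y' (Fin.last k) := by omega
    exact funext <| Fin.lastCases hlast hinit'
  have hfg (y : Fin (k + 1) → ℤ) : f (∑ i, (y i).natAbs) = g (ι y) := by
    refine (if_pos ?_).symm
    simp only [ι, box, Finset.mem_product, Fintype.mem_piFinset, Finset.mem_Icc,
      Finset.mem_univ, and_true, Fin.init]
    intro i
    have := Finset.single_le_sum (fun j _ ↦ Nat.zero_le ((y j).natAbs))
      (Finset.mem_univ i.castSucc)
    omega
  have hg (m : ℕ) : ∑' zb, g (m, zb) = (l1SphereCardBound k m : ℝ≥0∞) * f m := by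
    rw [tsum_eq_sum (s := box m) fun zb hzb ↦ if_neg hzb, Finset.sum_ite_of_true fun _ h ↦ h]
    simp only [l1SphereCardBound, Finset.sum_const, nsmul_eq_mul, box, Finset.card_product,
      Fintype.card_piFinset, Finset.prod_const, Int.card_Icc, Finset.card_univ, Fintype.card_fin,
      Fintype.card_bool]
    rw [show ((m : ℤ) + 1 - -m).toNat = 2 * m + 1 by omega, mul_comm _ 2]
  calc ∑' y, f (∑ i, (y i).natAbs) = ∑' y, g (ι y) := tsum_congr hfg
    _ ≤ ∑' p, g p := ENNReal.tsum_comp_le_tsum_of_injective hι g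
    _ = ∑' m, ∑' zb, g (m, zb) := ENNReal.tsum_prod'
    _ = _ := tsum_congr hg

lemma measure_le_insulationRadius_le {Ω : Type*} [MeasurableSpace Ω] (μ : Measure Ω) {k : ℕ}
    {β : ℝ} (hβ : 0 < β) {h : (Fin (k + 1) → ℤ) → Ω → ℝ} (hh : ∀ y ω, 0 ≤ h y ω)
    (hstat : ∀ (y : Fin (k + 1) → ℤ) (t : ℝ), μ {ω | t ≤ h y ω} = μ {ω | t ≤ h 0 ω})
    {s t : ℝ} (hs : 0 ≤ s) (hst : s < t) :
    μ {ω | t ≤ insulationRadius β (h · ω)} ≤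
      ∑' m, (l1SphereCardBound k m : ℝ≥0∞) * μ {ω | max s ((m : ℝ) ^ β⁻¹) ≤ h 0 ω} := by
  calc μ {ω | t ≤ insulationRadius β (h · ω)}
      ≤ μ (⋃ y, {ω | max s (((∑ i, (y i).natAbs : ℕ) : ℝ) ^ β⁻¹) ≤ h y ω}) := by
        refine measure_mono fun ω hω ↦ ?_
        obtain ⟨y, hsy, hy⟩ :=
          exists_lt_of_lt_insulationRadius hβ (hh · ω) hs (hst.trans_le hω)
        exact Set.mem_iUnion.2 ⟨y, max_le hsy.le hy⟩
    _ ≤ ∑' y, μ {ω | max s (((∑ i, (y i).natAbs : ℕ) : ℝ) ^ β⁻¹) ≤ h y ω} :=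
        measure_iUnion_le _
    _ = ∑' y, μ {ω | max s (((∑ i, (y i).natAbs : ℕ) : ℝ) ^ β⁻¹) ≤ h 0 ω} :=
        tsum_congr fun y ↦ hstat y (max s (((∑ i, (y i).natAbs : ℕ) : ℝ) ^ β⁻¹))
    _ ≤ _ := tsum_comp_sum_natAbs_le k fun m ↦ μ {ω | max s ((m : ℝ) ^ β⁻¹) ≤ h 0 ω}

lemma measure_le_le_of_nat_tail {Ω : Type*} [MeasurableSpace Ω] {μ : Measure Ω}
    {X : Ω → ℝ} {C a : ℝ} (ha : a ≤ 0)
    (htail : ∀ n : ℕ, 1 ≤ n → μ {ω | (n : ℝ) ≤ X ω} ≤ ENNReal.ofReal (C * (n : ℝ) ^ a))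
    {t : ℝ} (ht : 1 ≤ t) :
    μ {ω | t ≤ X ω} ≤ ENNReal.ofReal (2 ^ (-a) * max C 0 * t ^ a) := by
  have hn : 1 ≤ ⌊t⌋₊ := Nat.le_floor (by exact_mod_cast ht)
  have hfloor : t / 2 ≤ ⌊t⌋₊ := by
    have := Nat.lt_floor_add_one t
    have : (1 : ℝ) ≤ ⌊t⌋₊ := by exact_mod_cast hn
    linarith
  have hsub : {ω | t ≤ X ω} ⊆ {ω | (⌊t⌋₊ : ℝ) ≤ X ω} := fun ω hω ↦
    (Nat.floor_le (zero_le_one.trans ht)).trans hω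
  refine (measure_mono hsub).trans <| (htail _ hn).trans <| ENNReal.ofReal_le_ofReal ?_
  calc C * (⌊t⌋₊ : ℝ) ^ a ≤ max C 0 * (⌊t⌋₊ : ℝ) ^ a :=
        mul_le_mul_of_nonneg_right (le_max_left C 0) (by positivity)
    _ ≤ max C 0 * (t / 2) ^ a := mul_le_mul_of_nonneg_left
        (Real.rpow_le_rpow_of_nonpos (by positivity) hfloor ha) (le_max_right C 0)
    _ = 2 ^ (-a) * max C 0 * t ^ a := by
        rw [Real.div_rpow (by linarith) zero_le_two, Real.rpow_neg zero_le_two]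
        ring

lemma tsum_ofReal_rpow_nat_add_le {p : ℝ} (hp : p < -1) {N : ℕ} (hN : 0 < N) :
    ∑' n : ℕ, ENNReal.ofReal (((n + N + 1 : ℕ) : ℝ) ^ p) ≤
      ENNReal.ofReal (-(N : ℝ) ^ (p + 1) / (p + 1)) := by
  have hN' : (0 : ℝ) < N := by exact_mod_cast hN
  have hanti : AntitoneOn (fun x : ℝ ↦ x ^ p) (Set.Ici (N : ℝ)) := fun x hx y _ hxy ↦
    Real.rpow_le_rpow_of_nonpos (hN'.trans_le hx) hxy (by linarith)
  have hsum : Summable fun n : ℕ ↦ ((n + N + 1 : ℕ) : ℝ) ^ p := by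
    simpa only [add_assoc] using (summable_nat_add_iff (N + 1)).2 (Real.summable_nat_rpow.2 hp)
  rw [← ENNReal.ofReal_tsum_of_nonneg (fun _ ↦ by positivity) hsum,
    ← integral_Ioi_rpow_of_lt hp hN']
  exact ENNReal.ofReal_le_ofReal <| hanti.tsum_comp_add_le_integral N
    (integrableOn_Ioi_rpow_of_lt hp hN') fun t ht ↦ Real.rpow_nonneg (hN'.trans ht).le p

lemma sum_range_l1SphereCardBound_mul_le (k M : ℕ) {g : ℕ → ℝ≥0∞} {c : ℝ} (hc : 0 ≤ c)
    (hg : ∀ m, g m ≤ ENNReal.ofReal c) :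
    ∑ m ∈ Finset.range (M + 1), (l1SphereCardBound k m : ℝ≥0∞) * g m ≤
      ENNReal.ofReal (2 * (2 * M + 1) ^ (k + 1) * c) := by
  calc ∑ m ∈ Finset.range (M + 1), (l1SphereCardBound k m : ℝ≥0∞) * g m
      ≤ ∑ m ∈ Finset.range (M + 1), (l1SphereCardBound k M : ℝ≥0∞) * ENNReal.ofReal c := by
        refine Finset.sum_le_sum fun m hm ↦ mul_le_mul' (Nat.cast_le.2 ?_) (hg m)
        have : m ≤ M := Nat.lt_succ_iff.1 (Finset.mem_range.1 hm)
        unfold l1SphereCardBound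
        gcongr
    _ = ENNReal.ofReal ((M + 1) * l1SphereCardBound k M * c) := by
        rw [Finset.sum_const, Finset.card_range, nsmul_eq_mul, ← mul_assoc,
          ← Nat.cast_mul, ← ENNReal.ofReal_natCast, ← ENNReal.ofReal_mul (by positivity)]
        push_cast
        rfl
    _ ≤ ENNReal.ofReal (2 * (2 * M + 1) ^ (k + 1) * c) := by
        refine ENNReal.ofReal_le_ofReal (mul_le_mul_of_nonneg_right ?_ hc)
        simp only [l1SphereCardBound, pow_succ]
        push_cast
        nlinarith [pow_nonneg (by positivity : (0 : ℝ) ≤ 2 * M + 1) k]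

lemma tsum_l1SphereCardBound_mul_nat_add_le {k N : ℕ} (hN : 0 < N) {s K : ℝ} (hK : 0 ≤ K)
    (hs : (k : ℝ) + 1 < s) {g : ℕ → ℝ≥0∞}
    (hg : ∀ m : ℕ, 1 ≤ m → g m ≤ ENNReal.ofReal (K * (m : ℝ) ^ (-s))) :
    ∑' i, (l1SphereCardBound k (i + N + 1) : ℝ≥0∞) * g (i + N + 1) ≤
      ENNReal.ofReal (2 * 3 ^ k * K * ((N : ℝ) ^ (k + 1 - s) / (s - (k + 1)))) := by
  have hterm (m : ℕ) (hm : 1 ≤ m) : (l1SphereCardBound k m : ℝ≥0∞) * g m ≤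
      ENNReal.ofReal (2 * 3 ^ k * K) * ENNReal.ofReal ((m : ℝ) ^ ((k : ℝ) - s)) := by
    have hm' : (1 : ℝ) ≤ m := by exact_mod_cast hm
    have hweight : (l1SphereCardBound k m : ℝ) ≤ 2 * 3 ^ k * (m : ℝ) ^ k := by
      simp only [l1SphereCardBound]
      push_cast
      rw [mul_assoc, ← mul_pow]
      gcongr
      linarith
    rw [← ENNReal.ofReal_mul (by positivity), ← ENNReal.ofReal_natCast]
    calc ENNReal.ofReal (l1SphereCardBound k m : ℝ) * g m
        ≤ ENNReal.ofReal (2 * 3 ^ k * (m : ℝ) ^ k) * ENNReal.ofReal (K * (m : ℝ) ^ (-s)) :=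
          mul_le_mul' (ENNReal.ofReal_le_ofReal hweight) (hg m hm)
      _ = ENNReal.ofReal (2 * 3 ^ k * K * (m : ℝ) ^ ((k : ℝ) - s)) := by
          rw [← ENNReal.ofReal_mul (by positivity), sub_eq_add_neg,
            Real.rpow_add (by positivity), Real.rpow_natCast]
          ring_nf
  calc ∑' i, (l1SphereCardBound k (i + N + 1) : ℝ≥0∞) * g (i + N + 1)
      ≤ ∑' i : ℕ, ENNReal.ofReal (2 * 3 ^ k * K) *
          ENNReal.ofReal (((i + N + 1 : ℕ) : ℝ) ^ ((k : ℝ) - s)) :=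
        ENNReal.tsum_le_tsum fun i ↦ hterm _ (by omega)
    _ ≤ ENNReal.ofReal (2 * 3 ^ k * K) *
          ENNReal.ofReal (-(N : ℝ) ^ ((k : ℝ) - s + 1) / ((k : ℝ) - s + 1)) := by
        rw [ENNReal.tsum_mul_left]
        exact mul_le_mul_right (tsum_ofReal_rpow_nat_add_le (by linarith) hN) _
    _ = _ := by
        rw [← ENNReal.ofReal_mul (by positivity), neg_div, ← div_neg]
        ring_nf

lemma tsum_l1SphereCardBound_mul_le {k : ℕ} {β K x : ℝ} (hβ : 0 < β) (hK : 0 ≤ K)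
    (hβk : (k : ℝ) + 1 < β⁻¹ * k) (hx : 1 ≤ x) {g : ℕ → ℝ≥0∞}
    (hunif : ∀ m, g m ≤ ENNReal.ofReal (K * x ^ (-(k : ℝ))))
    (hdecay : ∀ m : ℕ, 1 ≤ m → g m ≤ ENNReal.ofReal (K * (m : ℝ) ^ (-(β⁻¹ * k)))) :
    ∑' m, (l1SphereCardBound k m : ℝ≥0∞) * g m ≤
      ENNReal.ofReal ((2 * 5 ^ (k + 1) + 2 * 3 ^ k / (β⁻¹ * k - (k + 1))) * K *
        x ^ (β * (k + 1) - k)) := by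
  -- split the sum at `M = ⌈x ^ β⌉`, where the two bounds on `g` cross over
  set M := ⌈x ^ β⌉₊
  have hxβ : 1 ≤ x ^ β := Real.one_le_rpow hx hβ.le
  have hM : 0 < M := Nat.ceil_pos.2 (by linarith)
  have hM_ge : x ^ β ≤ M := Nat.le_ceil _
  have hM_le : (M : ℝ) ≤ 2 * x ^ β := by linarith [Nat.ceil_lt_add_one (by linarith : 0 ≤ x ^ β)]
  have hx0 : 0 < x := by linarith
  have hhead : ENNReal.ofReal (2 * (2 * M + 1) ^ (k + 1) * (K * x ^ (-(k : ℝ)))) ≤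
      ENNReal.ofReal (2 * 5 ^ (k + 1) * K * x ^ (β * (k + 1) - k)) := by
    refine ENNReal.ofReal_le_ofReal ?_
    have h5 : (2 * M + 1 : ℝ) ^ (k + 1) ≤ (5 * x ^ β) ^ (k + 1) := by gcongr; linarith
    calc 2 * (2 * M + 1 : ℝ) ^ (k + 1) * (K * x ^ (-(k : ℝ)))
        ≤ 2 * (5 * x ^ β) ^ (k + 1) * (K * x ^ (-(k : ℝ))) := by gcongr
      _ = 2 * 5 ^ (k + 1) * K * x ^ (β * (k + 1) - k) := by
        rw [mul_pow, ← Real.rpow_natCast (x ^ β), ← Real.rpow_mul hx0.le, sub_eq_add_neg,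
          Real.rpow_add hx0]
        push_cast
        ring
  have hrest : ENNReal.ofReal
        (2 * 3 ^ k * K * ((M : ℝ) ^ (k + 1 - β⁻¹ * k) / (β⁻¹ * k - (k + 1)))) ≤
      ENNReal.ofReal (2 * 3 ^ k / (β⁻¹ * k - (k + 1)) * K * x ^ (β * (k + 1) - k)) := by
    refine ENNReal.ofReal_le_ofReal ?_
    have hMx : (M : ℝ) ^ (k + 1 - β⁻¹ * k) ≤ x ^ (β * (k + 1) - k) := by
      calc (M : ℝ) ^ (k + 1 - β⁻¹ * k) ≤ (x ^ β) ^ (k + 1 - β⁻¹ * k) :=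
            Real.rpow_le_rpow_of_nonpos (by linarith) hM_ge (by linarith)
        _ = x ^ (β * (k + 1) - k) := by
            rw [← Real.rpow_mul hx0.le]
            congr 1
            field_simp
    calc 2 * 3 ^ k * K * ((M : ℝ) ^ (k + 1 - β⁻¹ * k) / (β⁻¹ * k - (k + 1)))
        = 2 * 3 ^ k / (β⁻¹ * k - (k + 1)) * K * (M : ℝ) ^ (k + 1 - β⁻¹ * k) := by ring
      _ ≤ _ := by gcongr
  rw [← Summable.sum_add_tsum_nat_add' (k := M + 1) ENNReal.summable]
  refine (add_le_add ((sum_range_l1SphereCardBound_mul_le k M (by positivity) hunif).trans hhead)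
    ((tsum_l1SphereCardBound_mul_nat_add_le hM hK hβk hdecay).trans hrest)).trans_eq ?_
  rw [← ENNReal.ofReal_add (by positivity)
    (mul_nonneg (mul_nonneg (div_nonneg (by positivity) (sub_pos.2 hβk).le) hK) (by positivity))]
  ring_nf

lemma tsum_l1SphereCardBound_mul_measure_le {Ω : Type*} [MeasurableSpace Ω] {μ : Measure Ω}
    {X : Ω → ℝ} {k : ℕ} {β K x : ℝ} (hβ : 0 < β) (hK : 0 ≤ K) (hβk : (k : ℝ) + 1 < β⁻¹ * k)
    (htail : ∀ t : ℝ, 1 ≤ t → μ {ω | t ≤ X ω} ≤ ENNReal.ofReal (K * t ^ (-(k : ℝ))))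
    (hx : 1 ≤ x) :
    ∑' m, (l1SphereCardBound k m : ℝ≥0∞) * μ {ω | max x ((m : ℝ) ^ β⁻¹) ≤ X ω} ≤
      ENNReal.ofReal ((2 * 5 ^ (k + 1) + 2 * 3 ^ k / (β⁻¹ * k - (k + 1))) * K *
        x ^ (β * (k + 1) - k)) := by
  refine tsum_l1SphereCardBound_mul_le hβ hK hβk hx
    (fun m ↦ (measure_mono fun ω hω ↦ show x ≤ X ω from (le_max_left _ _).trans hω).trans
      (htail x hx))
    fun m hm ↦ ?_
  have hm' : (1 : ℝ) ≤ m := by exact_mod_cast hm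
  calc μ {ω | max x ((m : ℝ) ^ β⁻¹) ≤ X ω} ≤ μ {ω | (m : ℝ) ^ β⁻¹ ≤ X ω} :=
        measure_mono fun ω hω ↦ show _ ≤ X ω from (le_max_right _ _).trans hω
    _ ≤ ENNReal.ofReal (K * ((m : ℝ) ^ β⁻¹) ^ (-(k : ℝ))) :=
        htail _ (Real.one_le_rpow hm' (inv_nonneg.2 hβ.le))
    _ = ENNReal.ofReal (K * (m : ℝ) ^ (-(β⁻¹ * k))) := by
        rw [← Real.rpow_mul (by positivity), mul_neg]

theorem stmt10_general (d : ℕ) (hd : 2 ≤ d) (β : ℝ) (hβ0 : 0 < β)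
    (hβ : β < ((d : ℝ) - 2) / (2 * d))
    (Ω : Type) [MeasurableSpace Ω] (ℙ : Measure Ω)
    (h : (Fin d → ℤ) → Ω → ℝ) (hpos : ∀ y ω, 0 ≤ h y ω)
    (hstat : ∀ (y : Fin d → ℤ) (t : ℝ), ℙ {ω | t ≤ h y ω} = ℙ {ω | t ≤ h 0 ω})
    (C : ℝ)
    (htail : ∀ n : ℕ, 1 ≤ n →
      ℙ {ω | (n : ℝ) ≤ h 0 ω} ≤ ENNReal.ofReal (C * (n : ℝ) ^ ((1 : ℝ) - d))) :
    limsup (fun n : ℕ =>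
      ENNReal.ofReal ((n : ℝ) ^ ((1 - β) * d - 1)) *
        ℙ {ω | (n : ℝ) ≤
          sSup {r : ℝ | ∃ y : Fin d → ℤ,
            r = h y ω ∧ ((∑ i, |y i| : ℤ) : ℝ) ≤ h y ω ^ β}}) atTop < ⊤ := by
  obtain ⟨k, rfl⟩ : ∃ k, d = k + 1 := ⟨d - 1, by omega⟩
  have hβk : (k : ℝ) + 1 < β⁻¹ * k := by
    rw [lt_div_iff₀ (by positivity)] at hβ
    push_cast at hβ
    rw [lt_inv_mul_iff₀ hβ0]
    nlinarith
  rw [show (1 : ℝ) - ((k + 1 : ℕ) : ℝ) = -k by push_cast; ring] at htail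
  set e := (1 - β) * ((k + 1 : ℕ) : ℝ) - 1
  set B := (2 * 5 ^ (k + 1) + 2 * 3 ^ k / (β⁻¹ * k - (k + 1))) * (2 ^ (-(-k : ℝ)) * max C 0)
  refine lt_of_le_of_lt (limsup_le_of_le (by isBoundedDefault) ?_)
    (ENNReal.ofReal_lt_top (r := B * 2 ^ e))
  filter_upwards [eventually_ge_atTop 2] with n hn
  replace hn : (2 : ℝ) ≤ n := by exact_mod_cast hn
  calc ENNReal.ofReal ((n : ℝ) ^ e) * ℙ {ω | (n : ℝ) ≤ insulationRadius β (h · ω)}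
      ≤ ENNReal.ofReal ((n : ℝ) ^ e) * ENNReal.ofReal (B * (n / 2 : ℝ) ^ (-e)) := by
        refine mul_le_mul_right ((measure_le_insulationRadius_le ℙ hβ0 hpos hstat
          (by positivity) (by linarith : (n / 2 : ℝ) < n)).trans ?_) _
        rw [show -e = β * (k + 1) - k by simp only [e]; push_cast; ring]
        exact tsum_l1SphereCardBound_mul_measure_le hβ0 (by positivity) hβk
          (fun _ ↦ measure_le_le_of_nat_tail (by simp) htail) (by linarith)
    _ = ENNReal.ofReal (B * 2 ^ e) := by
        have hn0 : (0 : ℝ) < n := by linarith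
        rw [← ENNReal.ofReal_mul (by positivity), Real.div_rpow hn0.le zero_le_two,
          Real.rpow_neg hn0.le, Real.rpow_neg zero_le_two]
        field_simp

/-- Lemma 6 of Bramson–Zeitouni–Zerner (tail bound for the insulation radius): if
`(h(y))` is stationary, nonnegative, with `ℙ[h(0) ≥ n] ≤ C n^(1-d)`, and
`H(x) = sup{h(y) : |x-y|₁ ≤ h(y)^β}` with `0 < β < (d-2)/(2d)`, then
`limsup_n n^((1-β)d - 1) ℙ[H(0) ≥ n] < ∞`. -/
theorem stmt10 (d : ℕ) (hd : 2 ≤ d) (β : ℝ) (hβ0 : 0 < β)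
    (hβ : β < ((d : ℝ) - 2) / (2 * d))
    (Ω : Type) [MeasurableSpace Ω] (ℙ : Measure Ω) [IsProbabilityMeasure ℙ]
    (h : (Fin d → ℤ) → Ω → ℝ) (hpos : ∀ y ω, 0 ≤ h y ω)
    (hstat : ∀ (y : Fin d → ℤ) (t : ℝ), ℙ {ω | t ≤ h y ω} = ℙ {ω | t ≤ h 0 ω})
    (C : ℝ)
    (htail : ∀ n : ℕ, 1 ≤ n →
      ℙ {ω | (n : ℝ) ≤ h 0 ω} ≤ ENNReal.ofReal (C * (n : ℝ) ^ ((1 : ℝ) - d))) :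
    limsup (fun n : ℕ =>
      ENNReal.ofReal ((n : ℝ) ^ ((1 - β) * d - 1)) *
        ℙ {ω | (n : ℝ) ≤
          sSup {r : ℝ | ∃ y : Fin d → ℤ,
            r = h y ω ∧ ((∑ i, |y i| : ℤ) : ℝ) ≤ h y ω ^ β}}) atTop < ⊤ :=
  stmt10_general d hd β hβ0 hβ Ω ℙ h hpos hstat C htail
end

section
/- (Disjointness of insulated forests.) Let h₁, h₂, H₁, H₂ : ℤ^d → [0,∞) be functions with Hᵢ(x) ≥ hᵢ(y) whenever |x − y|₁ ≤ hᵢ(y)^β. Define 𝕋̃ᵢ = {x : hᵢ(x) > Hⱼ(y) for all y with |y − x|₁ ≤ hᵢ(x)^β} (where {i,j} = {1,2}), and Bᵢ = ⋃_{x ∈ 𝕋ᵢ} B(x, hᵢ(x)^β) for any 𝕋ᵢ ⊆ 𝕋̃ᵢ. Then B₁ ∩ B₂ = ∅. -/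
/-- Disjointness of insulated forests: if `Hᵢ(x) ≥ hᵢ(y)` whenever `|x-y|₁ ≤ hᵢ(y)^β`,
`𝕋̃ᵢ = {x : hᵢ(x) > Hⱼ(y) for all y with |y-x|₁ ≤ hᵢ(x)^β}`, `Tᵢ ⊆ 𝕋̃ᵢ`, and
`Bᵢ = ⋃_{x ∈ Tᵢ} B(x, hᵢ(x)^β)`, then `B₁ ∩ B₂ = ∅`. -/
theorem stmt12 (d : ℕ) (β : ℝ) (hβ : 0 < β)
    (h₁ h₂ H₁ H₂ : (Fin d → ℤ) → ℝ)
    (h₁0 : ∀ x, 0 ≤ h₁ x) (h₂0 : ∀ x, 0 ≤ h₂ x)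
    (H₁0 : ∀ x, 0 ≤ H₁ x) (H₂0 : ∀ x, 0 ≤ H₂ x)
    (hH₁ : ∀ x y, ((∑ i, |x i - y i| : ℤ) : ℝ) ≤ h₁ y ^ β → h₁ y ≤ H₁ x)
    (hH₂ : ∀ x y, ((∑ i, |x i - y i| : ℤ) : ℝ) ≤ h₂ y ^ β → h₂ y ≤ H₂ x)
    (T₁ T₂ : Set (Fin d → ℤ))
    (hT₁ : ∀ x ∈ T₁, ∀ y, ((∑ i, |y i - x i| : ℤ) : ℝ) ≤ h₁ x ^ β → H₂ y < h₁ x)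
    (hT₂ : ∀ x ∈ T₂, ∀ y, ((∑ i, |y i - x i| : ℤ) : ℝ) ≤ h₂ x ^ β → H₁ y < h₂ x) :
    (⋃ x ∈ T₁, {y : Fin d → ℤ | ((∑ i, |y i - x i| : ℤ) : ℝ) ≤ h₁ x ^ β}) ∩
      (⋃ x ∈ T₂, {y : Fin d → ℤ | ((∑ i, |y i - x i| : ℤ) : ℝ) ≤ h₂ x ^ β}) = ∅ := by
  ext y
  simp only [Set.mem_inter_iff, Set.mem_iUnion, Set.mem_setOf_eq, Set.mem_empty_iff_false,
    iff_false, not_and]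
  rintro ⟨x₁, hx₁, hb₁⟩ ⟨x₂, hx₂, hb₂⟩
  have h1 : h₂ x₂ ≤ H₂ y := hH₂ y x₂ hb₂
  have h2 : h₁ x₁ ≤ H₁ y := hH₁ y x₁ hb₁
  have h3 : H₂ y < h₁ x₁ := hT₁ x₁ hx₁ y hb₁
  have h4 : H₁ y < h₂ x₂ := hT₂ x₂ hx₂ y hb₂
  linarith
end
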